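/- arXiv:2403.17960 — 4 statements merged into one kernel-verified Lean document; each statement's English description precedes it below -/
import Mathlib

section
/- Let G be a finite group and let H < K < G be subgroups. If all maximal chains of H in G have the same length, then all maximal chains of K in G have the same length. -/
/-!
Since the subgroup lattice of a finite group has finite height, some covering chain
`H = e₀ ⋖ ⋯ ⋖ e_t = K` exists. Prefixing it to maximal chains of `K` of lengths `r` and `s`
gives maximal chains of `H` of lengths `t + r` and `t + s`, so `r = s`.
-/

/-- A maximal chain of `H` in the ambient group of length `r`: a chain
`H = c 0 < c 1 < ... < c r = ⊤` where each `c i` is a maximal subgroup of `c (i+1)`,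
i.e. each step is a covering relation in the subgroup lattice. -/
def IsMaxChainOf {G : Type*} [Group G] (H : Subgroup G) (r : ℕ) (c : ℕ → Subgroup G) : Prop :=
  c 0 = H ∧ c r = ⊤ ∧ ∀ i < r, c i ⋖ c (i + 1)

/-- All maximal chains of `H` in the ambient group have the same length. -/
def AllMaxChainsSameLength {G : Type*} [Group G] (H : Subgroup G) : Prop :=
  ∀ (r s : ℕ) (c d : ℕ → Subgroup G),
    IsMaxChainOf H r c → IsMaxChainOf H s d → r = s

section SeqAppend

variable {α : Type*}

/-- The sequence running through `c 0, …, c m` and then through `d 1, d 2, …`. -/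
def seqAppend (c : ℕ → α) (m : ℕ) (d : ℕ → α) : ℕ → α :=
  fun i => if i ≤ m then c i else d (i - m)

lemma seqAppend_of_le {c d : ℕ → α} {m i : ℕ} (hi : i ≤ m) : seqAppend c m d i = c i :=
  if_pos hi

lemma seqAppend_add {c d : ℕ → α} {m : ℕ} (hcd : c m = d 0) (i : ℕ) :
    seqAppend c m d (m + i) = d i := by
  rcases i.eq_zero_or_pos with rfl | hi
  · simpa [seqAppend] using hcd
  · simp [seqAppend, hi.ne']

lemma covBy_seqAppend [Preorder α] {c d : ℕ → α} {m n : ℕ}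
    (hc : ∀ i < m, c i ⋖ c (i + 1)) (hd : ∀ i < n, d i ⋖ d (i + 1)) (hcd : c m = d 0) :
    ∀ i < m + n, seqAppend c m d i ⋖ seqAppend c m d (i + 1) := by
  intro i hi
  rcases lt_or_ge i m with him | hmi
  · rw [seqAppend_of_le him.le, seqAppend_of_le him]
    exact hc i him
  · obtain ⟨j, rfl⟩ := Nat.exists_eq_add_of_le hmi
    rw [add_assoc, seqAppend_add hcd, seqAppend_add hcd]
    exact hd j (by omega)

end SeqAppend

lemma IsMaxChainOf.seqAppend_left {G : Type*} [Group G] {H K : Subgroup G}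
    {e c : ℕ → Subgroup G} {t r : ℕ} (he0 : e 0 = H) (het : e t = K)
    (hec : ∀ i < t, e i ⋖ e (i + 1)) (hc : IsMaxChainOf K r c) :
    IsMaxChainOf H (t + r) (seqAppend e t c) := by
  obtain ⟨hc0, hcr, hcc⟩ := hc
  have hjoin : e t = c 0 := het.trans hc0.symm
  exact ⟨(seqAppend_of_le t.zero_le).trans he0, (seqAppend_add hjoin r).trans hcr,
    covBy_seqAppend hec hcc hjoin⟩

theorem stmt_1_general {G : Type*} [Group G] [Finite G] (H K : Subgroup G)
    (hHK : H < K) (h : AllMaxChainsSameLength H) :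
    AllMaxChainsSameLength K := by
  obtain ⟨e, he0, t, het, hec⟩ := exists_covBy_seq_of_wellFoundedLT_wellFoundedGT_of_le hHK.le
  intro r s c d hc hd
  exact Nat.add_left_cancel
    (h _ _ _ _ (hc.seqAppend_left he0 het hec) (hd.seqAppend_left he0 het hec))

theorem stmt_1 {G : Type*} [Group G] [Finite G] (H K : Subgroup G)
    (hHK : H < K) (hKG : K < ⊤) (h : AllMaxChainsSameLength H) :
    AllMaxChainsSameLength K :=
  stmt_1_general H K hHK h
end

section
/- For every nontrivial subgroup H of the alternating group A₅ with |H| ≠ 2, all maximal chains of H in A₅ have the same length. -/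
/-!
The subgroups of `A₅` of order at least 3 are graded by their order: orders 3, 4, 5 (the Sylow
subgroups) have rank 0, orders 6, 10, 12 rank 1 and `A₅` itself rank 2, and every covering
`K ⋖ L` raises the rank by one, so every maximal chain from `H` has length `2 - rank H`.
Three facts make the grading work. Since `A₅` is simple, it embeds into the symmetric group on
the cosets of a proper subgroup, so proper subgroups have index at least 5, i.e. order at
most 12. An abelian Sylow subgroup of a simple group is never maximal: it is properly contained
in its normalizer, since otherwise Burnside's transfer theorem would give it a normal
complement. Finally, a subgroup of order 6 of a group of order 12 would make the subgroup of
order 3 inside it normal, and then an involution centralizes it and produces an element of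
order 6, which `A₅` does not have.
-/

open Subgroup

section

variable {G : Type*} [Group G] [Finite G] {p : ℕ} [Fact p.Prime]

theorem Sylow.normal_of_index_normalizer_lt (P : Sylow p G)
    (h : (normalizer (P : Set G)).index < p) : (P : Subgroup G).Normal := by
  have hone : (normalizer (P : Set G)).index = 1 :=
    (P.card_eq_index_normalizer ▸ card_sylow_modEq_one p G).eq_of_lt_of_lt h
      (Fact.out : p.Prime).one_lt
  exact normalizer_eq_top_iff.mp (index_eq_one.mp hone)

theorem Sylow.lt_normalizer_of_isSimpleGroup [IsSimpleGroup G] (P : Sylow p G)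
    [IsMulCommutative P] (hbot : (P : Subgroup G) ≠ ⊥) (htop : (P : Subgroup G) ≠ ⊤) :
    (P : Subgroup G) < normalizer (P : Set G) := by
  refine P.le_normalizer.lt_of_ne fun hself => ?_
  have hP : normalizer (P : Set G) ≤ centralizer (P : Set G) := hself ▸ le_centralizer _
  have hcompl := MonoidHom.ker_transferSylow_isComplement' P hP
  rcases IsSimpleGroup.eq_bot_or_eq_top_of_normal _ (MonoidHom.transferSylow P hP).normal_ker
    with h | h
  · exact htop (isComplement'_bot_left.mp (h ▸ hcompl))
  · exact hbot (isComplement'_top_left.mp (h ▸ hcompl))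

theorem Sylow.not_covBy_top_of_isSimpleGroup [IsSimpleGroup G] (P : Sylow p G)
    [IsMulCommutative P] (hbot : (P : Subgroup G) ≠ ⊥) : ¬ (P : Subgroup G) ⋖ ⊤ := by
  intro hcov
  have htop := hcov.lt.ne
  refine hcov.2 (P.lt_normalizer_of_isSimpleGroup hbot htop)
    (lt_top_iff_ne_top.mpr fun hnorm => ?_)
  rcases IsSimpleGroup.eq_bot_or_eq_top_of_normal _ (normalizer_eq_top_iff.mp hnorm) with h | h
  exacts [hbot h, htop h]

theorem IsSimpleGroup.card_dvd_factorial_index [IsSimpleGroup G] {H : Subgroup G}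
    (hH : H ≠ ⊤) : Nat.card G ∣ H.index.factorial := by
  have hcore : H.normalCore = ⊥ :=
    (IsSimpleGroup.eq_bot_or_eq_top_of_normal _ H.normalCore_normal).resolve_right
      fun h => hH (top_le_iff.mp (h ▸ H.normalCore_le))
  rw [← index_bot, ← hcore, normalCore_eq_ker, index_ker, index_eq_card, ← Nat.card_perm]
  exact card_subgroup_dvd_card _

end

section OrderTwelve

variable {G : Type*} [Group G]

/-- `zpowers x` has index 2 in `K`, so `K` normalizes it; its normalizer then has index at most
2 < 3 in `G`, which the Sylow count forces to be 1. -/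
theorem zpowers_normal_of_mem_of_card_eq_six (hG : Nat.card G = 12) {K : Subgroup G}
    (hK : Nat.card K = 6) {x : G} (hxK : x ∈ K) (hx : orderOf x = 3) : (zpowers x).Normal := by
  have : Finite G := Nat.finite_of_card_ne_zero (by omega)
  have : Fact (Nat.Prime 3) := ⟨Nat.prime_three⟩
  have hP : Nat.card (zpowers x) = 3 := by rw [Nat.card_zpowers, hx]
  have hPK : zpowers x ≤ K := zpowers_le.mpr hxK
  have hPK_index : ((zpowers x).subgroupOf K).index = 2 := by
    have := card_mul_index ((zpowers x).subgroupOf K)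
    rw [Nat.card_congr (subgroupOfEquivOfLe hPK).toEquiv, hP, hK] at this
    omega
  have := normal_of_index_eq_two hPK_index
  have hKN : K ≤ normalizer (zpowers x : Set G) := le_normalizer_of_normal_subgroupOf hPK
  have hK_index : K.index = 2 := by
    have := card_mul_index K
    rw [hK, hG] at this
    omega
  have hP_index : ¬ 3 ∣ (zpowers x).index := by
    have := card_mul_index (zpowers x)
    rw [hP, hG] at this
    omega
  exact ((IsPGroup.of_card (n := 1) hP).toSylow hP_index).normal_of_index_normalizer_lt
    (lt_of_le_of_lt (Nat.le_of_dvd (by omega) (index_dvd_of_le hKN)) (by omega))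

/-- Conjugation `G → Aut ⟨x⟩ ≅ (ℤ/3)ˣ` has a kernel of index at most 2, hence of even order. -/
theorem exists_orderOf_eq_two_commute_of_zpowers_normal [Finite G] (hG : 4 ∣ Nat.card G)
    {x : G} (hx : orderOf x = 3) [(zpowers x).Normal] :
    ∃ s : G, orderOf s = 2 ∧ Commute s x := by
  set C := (MulAut.conjNormal (H := zpowers x)).ker
  have hC_index : C.index ≤ 2 := by
    have : IsCyclic (zpowers x) := isCyclic_of_prime_card (by rw [Nat.card_zpowers, hx])
    rw [index_ker]
    calc Nat.card (MulAut.conjNormal (H := zpowers x)).range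
        ≤ Nat.card (MulAut (zpowers x)) := card_le_card_group _
      _ = 2 := by rw [IsCyclic.card_mulAut, Nat.card_zpowers, hx]; rfl
  obtain ⟨s, hs⟩ : ∃ s : C, orderOf s = 2 := by
    refine exists_prime_orderOf_dvd_card' 2 ?_
    have hmul := card_mul_index C
    have : C.index ≠ 0 := index_ne_zero_of_finite
    interval_cases C.index <;> omega
  refine ⟨s, by rw [orderOf_coe, hs], ?_⟩
  have := congrArg Subtype.val (DFunLike.congr_fun (MonoidHom.mem_ker.mp s.2) ⟨x, mem_zpowers x⟩)
  rw [MulAut.conjNormal_apply] at this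
  exact mul_inv_eq_iff_eq_mul.mp this

theorem Subgroup.card_ne_six_of_card_eq_twelve (hG : Nat.card G = 12)
    (h6 : ∀ g : G, orderOf g ≠ 6) (K : Subgroup G) : Nat.card K ≠ 6 := by
  intro hK
  have : Finite G := Nat.finite_of_card_ne_zero (by omega)
  obtain ⟨y, hy⟩ : ∃ y : K, orderOf y = 3 :=
    exists_prime_orderOf_dvd_card' 3 (by rw [hK]; norm_num)
  have hx : orderOf (y : G) = 3 := by rw [orderOf_coe, hy]
  have := zpowers_normal_of_mem_of_card_eq_six hG hK y.2 hx
  obtain ⟨s, hs, hcomm⟩ := exists_orderOf_eq_two_commute_of_zpowers_normal (by omega) hx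
  refine h6 (s * y) ?_
  rw [hcomm.orderOf_mul_eq_mul_orderOf_of_coprime (by rw [hs, hx]; norm_num), hs, hx]

end OrderTwelve

section IsMaxChainOf

variable {G : Type*} [Group G] {Q : Subgroup G → Prop} {f : Subgroup G → ℕ}

theorem IsMaxChainOf.add_eq_of_covBy (hf : ∀ ⦃K L⦄, Q K → K ⋖ L → Q L ∧ f L = f K + 1)
    {H : Subgroup G} {r : ℕ} {c : ℕ → Subgroup G} (hc : IsMaxChainOf H r c) (hH : Q H) :
    r + f H = f ⊤ := by
  induction r generalizing H c with
  | zero =>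
    obtain ⟨rfl, htop, -⟩ := hc
    simp [htop]
  | succ r ih =>
    obtain ⟨rfl, htop, hcov⟩ := hc
    have hcov0 : c 0 ⋖ c 1 := hcov 0 r.succ_pos
    obtain ⟨hQ, hstep⟩ := hf hH hcov0
    have : r + f (c 1) = f ⊤ :=
      ih (c := fun i => c (i + 1)) ⟨rfl, htop, fun i hi => hcov (i + 1) (by omega)⟩ hQ
    omega

theorem AllMaxChainsSameLength.of_covBy (hf : ∀ ⦃K L⦄, Q K → K ⋖ L → Q L ∧ f L = f K + 1)
    {H : Subgroup G} (hH : Q H) : AllMaxChainsSameLength H := fun r s _ _ hc hd => by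
  have := hc.add_eq_of_covBy hf hH
  have := hd.add_eq_of_covBy hf hH
  omega

end IsMaxChainOf

namespace AlternatingFive

local notation "A₅" => alternatingGroup (Fin 5)

theorem card_eq_sixty : Nat.card A₅ = 60 := by
  rw [nat_card_alternatingGroup, Nat.card_fin]; rfl

set_option maxRecDepth 10000 in
theorem orderOf_ne_six (g : A₅) : orderOf g ≠ 6 := by
  have key : ∀ g : A₅, g ^ 6 = 1 → g ^ 2 = 1 ∨ g ^ 3 = 1 := by decide
  intro h
  rcases key g (h ▸ pow_orderOf_eq_one g) with h2 | h3
  · have := orderOf_le_of_pow_eq_one two_pos h2; omega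
  · have := orderOf_le_of_pow_eq_one three_pos h3; omega

theorem card_le_twelve_of_ne_top {K : Subgroup A₅} (hK : K ≠ ⊤) : Nat.card K ≤ 12 := by
  have hdvd := IsSimpleGroup.card_dvd_factorial_index hK
  have hmul := card_mul_index K
  rw [card_eq_sixty] at hdvd hmul
  have : 5 ≤ K.index := by
    by_contra!
    interval_cases K.index <;> simp_all [Nat.factorial]
  nlinarith

theorem card_ne_six_of_le_of_card_eq_twelve {K L : Subgroup A₅} (hKL : K ≤ L)
    (hL : Nat.card L = 12) : Nat.card K ≠ 6 := by
  rw [← Nat.card_congr (subgroupOfEquivOfLe hKL).toEquiv]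
  exact card_ne_six_of_card_eq_twelve hL (fun g => orderOf_coe g ▸ orderOf_ne_six g) _

theorem not_covBy_top_of_card_eq {K : Subgroup A₅}
    (hK : Nat.card K = 3 ∨ Nat.card K = 4 ∨ Nat.card K = 5) : ¬ K ⋖ ⊤ := by
  obtain ⟨p, hp, hpK, hindex, hcomm⟩ : ∃ p, p.Prime ∧ IsPGroup p K ∧ ¬ p ∣ K.index ∧
      IsMulCommutative K := by
    have hmul := card_mul_index K
    rcases hK with hK | hK | hK <;> rw [hK, card_eq_sixty] at hmul
    · have : Fact (Nat.Prime 3) := ⟨Nat.prime_three⟩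
      exact ⟨3, Nat.prime_three, .of_card (n := 1) hK, by omega,
        (isCyclic_of_prime_card hK).isMulCommutative⟩
    · have : Fact (Nat.Prime 2) := ⟨Nat.prime_two⟩
      have hK' : Nat.card K = 2 ^ 2 := hK
      exact ⟨2, Nat.prime_two, .of_card hK', by omega,
        IsPGroup.isMulCommutative_of_card_eq_prime_sq hK'⟩
    · have : Fact (Nat.Prime 5) := ⟨Nat.prime_five⟩
      exact ⟨5, Nat.prime_five, .of_card (n := 1) hK, by omega,
        (isCyclic_of_prime_card hK).isMulCommutative⟩
  have : Fact p.Prime := ⟨hp⟩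
  have hbot : K ≠ ⊥ := by
    rintro rfl
    rw [card_bot] at hK
    omega
  have : IsMulCommutative (hpK.toSylow hindex : Subgroup A₅) := hcomm
  exact (hpK.toSylow hindex).not_covBy_top_of_isSimpleGroup hbot

def rankOfCard (n : ℕ) : ℕ := if n ≤ 5 then 0 else if n ≤ 12 then 1 else 2

theorem rankOfCard_covBy {K L : Subgroup A₅} (hK : 3 ≤ Nat.card K) (hKL : K ⋖ L) :
    3 ≤ Nat.card L ∧ rankOfCard (Nat.card L) = rankOfCard (Nat.card K) + 1 := by
  have hlt : Nat.card K < Nat.card L := (card_le_of_le hKL.le).lt_of_ne fun h =>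
    hKL.lt.ne (eq_of_le_of_card_ge hKL.le h.ge)
  have hdvd : Nat.card K ∣ Nat.card L := card_dvd_of_le hKL.le
  have hK12 : Nat.card K ≤ 12 := card_le_twelve_of_ne_top (hKL.lt.trans_le le_top).ne
  refine ⟨by omega, ?_⟩
  by_cases hL : L = ⊤
  · have hK345 := mt not_covBy_top_of_card_eq (not_not.mpr (hL ▸ hKL))
    have hL60 : Nat.card L = 60 := by rw [hL, card_top, card_eq_sixty]
    rw [hL60] at hdvd ⊢
    interval_cases Nat.card K <;> simp_all [rankOfCard]
  · have hL12 := card_le_twelve_of_ne_top hL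
    have hK6 := card_ne_six_of_le_of_card_eq_twelve hKL.le
    interval_cases Nat.card L <;> interval_cases Nat.card K <;> simp_all [rankOfCard]

end AlternatingFive

theorem stmt_13 (H : Subgroup (alternatingGroup (Fin 5)))
    (hne : H ≠ ⊥) (hcard : Nat.card H ≠ 2) :
    AllMaxChainsSameLength H := by
  have h3 : 3 ≤ Nat.card H := by
    have := Nat.card_pos (α := H)
    have := mt card_eq_one.mp hne
    omega
  exact AllMaxChainsSameLength.of_covBy (Q := fun K => 3 ≤ Nat.card K)
    (f := fun K => AlternatingFive.rankOfCard (Nat.card K))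
    (fun _ _ => AlternatingFive.rankOfCard_covBy) h3
end

section
/- All maximal chains in the alternating group A₄ of every subgroup of prime order have the same length, yet A₄ is not supersolvable. -/
/-- A group is supersolvable if it has a normal series (all terms normal in the whole
group) with cyclic factors.  The factor `s (i+1) / s i` being cyclic is encoded as:
some single element `g` together with `s i` generates `s (i+1)`. -/
def IsSupersolvable (G : Type*) [Group G] : Prop :=
  ∃ (n : ℕ) (s : ℕ → Subgroup G), s 0 = ⊥ ∧ s n = ⊤ ∧ (∀ i, (s i).Normal) ∧
    ∀ i < n, ∃ g : G, s i ⊔ Subgroup.zpowers g = s (i + 1)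

abbrev A4 := alternatingGroup (Fin 4)

lemma A4_fintype_card : Fintype.card A4 = 12 := by decide

lemma A4_card : Nat.card A4 = 12 := by
  rw [Nat.card_eq_fintype_card, A4_fintype_card]

/-- The Klein four subgroup of `A4`: the set of elements of order dividing 2. -/
def V4 : Subgroup A4 where
  carrier := {x | x ^ 2 = 1}
  one_mem' := by decide
  mul_mem' := by
    intro a b ha hb
    exact (by decide : ∀ a b : A4, a ^ 2 = 1 → b ^ 2 = 1 → (a * b) ^ 2 = 1) a b ha hb
  inv_mem' := by
    intro a ha
    exact (by decide : ∀ a : A4, a ^ 2 = 1 → (a⁻¹) ^ 2 = 1) a ha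

lemma mem_V4 (x : A4) : x ∈ V4 ↔ x ^ 2 = 1 := Iff.rfl

lemma V4_card : Nat.card V4 = 4 := by
  have e : Nat.card V4 = Nat.card {x : A4 // x ^ 2 = 1} :=
    Nat.card_congr (Equiv.subtypeEquivRight fun x => Iff.rfl)
  rw [e, Nat.card_eq_fintype_card]
  decide

/-- helper: element powers from subgroup cardinality -/
lemma pow_card_mem_eq_one {K : Subgroup A4} {x : A4} (hx : x ∈ K) :
    x ^ Nat.card K = 1 := by
  have h : (⟨x, hx⟩ : K) ^ Nat.card K = 1 := pow_card_eq_one'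
  have h2 := congrArg (Subtype.val) h
  simp only [SubmonoidClass.coe_pow, OneMemClass.coe_one] at h2
  exact h2

/-- A₄ has no subgroup of order 6. -/
lemma no_order_six (K : Subgroup A4) (h6 : Nat.card K = 6) : False := by
  have hidx : K.index = 2 := by
    have := Subgroup.card_mul_index K
    rw [h6, A4_card] at this
    omega
  have hsq : ∀ a : A4, a ^ 2 ∈ K := fun a => Subgroup.sq_mem_of_index_two hidx a
  have hcube : ∀ a : A4, a ^ 3 = 1 → a ∈ K := by
    intro a ha
    have h4 : (a ^ 2) ^ 2 = a := by
      rw [← pow_mul]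
      have : a ^ 4 = a ^ 3 * a := by group
      rw [show (2 * 2 : ℕ) = 4 from rfl, this, ha, one_mul]
    rw [← h4]
    exact hsq (a ^ 2)
  classical
  let F : Finset A4 := Finset.univ.filter (fun x : A4 => x ^ 3 = 1)
  have hF : F.card = 9 := by decide
  have hFmem : ∀ y : A4, y ∈ F → y ^ 3 = 1 := by
    intro y hy
    exact (Finset.mem_filter.mp hy).2
  have hinj : Function.Injective (fun x : {y // y ∈ F} =>
      (⟨x.1, hcube x.1 (hFmem x.1 x.2)⟩ : K)) := by
    intro a b hab
    simp only [Subtype.mk.injEq] at hab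
    exact Subtype.ext hab
  have hle : Nat.card {y // y ∈ F} ≤ Nat.card K :=
    Nat.card_le_card_of_injective _ hinj
  rw [Nat.card_eq_fintype_card, Fintype.card_coe, hF, h6] at hle
  omega

lemma eq_V4_of_card_four (K : Subgroup A4) (h4 : Nat.card K = 4) : K = V4 := by
  have hle : K ≤ V4 := by
    intro x hx
    have := pow_card_mem_eq_one hx
    rw [h4] at this
    exact (by decide : ∀ x : A4, x ^ 4 = 1 → x ^ 2 = 1) x this
  refine Subgroup.eq_of_le_of_card_ge hle ?_
  rw [h4, V4_card]

lemma card_cases (K : Subgroup A4) :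
    Nat.card K = 1 ∨ Nat.card K = 2 ∨ Nat.card K = 3 ∨ Nat.card K = 4 ∨
    Nat.card K = 6 ∨ Nat.card K = 12 := by
  have hdvd : Nat.card K ∣ 12 := A4_card ▸ Subgroup.card_subgroup_dvd_card K
  have hmem : Nat.card K ∈ Nat.divisors 12 := Nat.mem_divisors.mpr ⟨hdvd, by norm_num⟩
  have : ∀ m ∈ Nat.divisors 12, m = 1 ∨ m = 2 ∨ m = 3 ∨ m = 4 ∨ m = 6 ∨ m = 12 := by decide
  exact this _ hmem

/-- Classification of overgroups of an order-3 subgroup. -/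
lemma over_three (H : Subgroup A4) (h3 : Nat.card H = 3) :
    ∀ K, H ≤ K → K = H ∨ K = ⊤ := by
  intro K hK
  have hdvd : Nat.card H ∣ Nat.card K := Subgroup.card_dvd_of_le hK
  rw [h3] at hdvd
  rcases card_cases K with h | h | h | h | h | h
  · rw [h] at hdvd; norm_num at hdvd
  · rw [h] at hdvd; norm_num at hdvd
  · left; exact (Subgroup.eq_of_le_of_card_ge hK (by rw [h, h3])).symm
  · rw [h] at hdvd; norm_num at hdvd
  · exact absurd (no_order_six K h) (by simp)
  · right; exact Subgroup.eq_top_of_card_eq K (by rw [h, A4_card])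

/-- Classification of overgroups of an order-2 subgroup. -/
lemma over_two (H : Subgroup A4) (h2 : Nat.card H = 2) :
    ∀ K, H ≤ K → K = H ∨ K = V4 ∨ K = ⊤ := by
  intro K hK
  have hdvd : Nat.card H ∣ Nat.card K := Subgroup.card_dvd_of_le hK
  rw [h2] at hdvd
  rcases card_cases K with h | h | h | h | h | h
  · rw [h] at hdvd; norm_num at hdvd
  · left; exact (Subgroup.eq_of_le_of_card_ge hK (by rw [h, h2])).symm
  · rw [h] at hdvd; norm_num at hdvd
  · right; left; exact eq_V4_of_card_four K h
  · exact absurd (no_order_six K h) (by simp)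
  · right; right; exact Subgroup.eq_top_of_card_eq K (by rw [h, A4_card])

lemma le_V4_of_card_two (H : Subgroup A4) (h2 : Nat.card H = 2) : H ≤ V4 := by
  intro x hx
  have := pow_card_mem_eq_one hx
  rw [h2] at this
  exact this

lemma chain_mono {G : Type*} [Group G] {H : Subgroup G} {r : ℕ} {c : ℕ → Subgroup G}
    (hc : IsMaxChainOf H r c) : ∀ i ≤ r, H ≤ c i := by
  obtain ⟨h0, _, hcov⟩ := hc
  intro i
  induction i with
  | zero => intro _; rw [h0]
  | succ n ih =>
    intro hn
    exact (ih (by omega)).trans (hcov n (by omega)).le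

lemma length_one {G : Type*} [Group G] (H : Subgroup G) (hne : H ≠ ⊤)
    (hcl : ∀ K, H ≤ K → K = H ∨ K = ⊤) :
    ∀ r c, IsMaxChainOf H r c → r = 1 := by
  intro r c hc
  obtain ⟨h0, hr, hcov⟩ := hc
  match r with
  | 0 => exact absurd (h0 ▸ hr) hne
  | 1 => rfl
  | (n+2) =>
    exfalso
    have h1 : c 1 = ⊤ := by
      rcases hcl (c 1) (chain_mono ⟨h0, hr, hcov⟩ 1 (by omega)) with h | h
      · exact absurd ((hcov 0 (by omega)).lt) (by rw [h0, h]; exact lt_irrefl _)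
      · exact h
    have := (hcov 1 (by omega)).lt
    rw [h1] at this
    exact not_top_lt this

lemma length_two {G : Type*} [Group G] (H M : Subgroup G) (h1 : H < M) (h2 : M < ⊤)
    (hcl : ∀ K, H ≤ K → K = H ∨ K = M ∨ K = ⊤) :
    ∀ r c, IsMaxChainOf H r c → r = 2 := by
  intro r c hc
  obtain ⟨h0, hr, hcov⟩ := hc
  have hne : H ≠ ⊤ := fun h => absurd (h ▸ (h1.trans h2)) (lt_irrefl _)
  have hnotcov : ¬ (H ⋖ (⊤ : Subgroup G)) := fun h => h.2 h1 h2
  match r with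
  | 0 => exact absurd (h0 ▸ hr) hne
  | 1 =>
    exfalso
    have := hcov 0 (by omega)
    rw [h0, hr] at this
    exact hnotcov this
  | (n+2) =>
    have hc1 : c 1 = M := by
      rcases hcl (c 1) (chain_mono ⟨h0, hr, hcov⟩ 1 (by omega)) with h | h | h
      · exact absurd ((hcov 0 (by omega)).lt) (by rw [h0, h]; exact lt_irrefl _)
      · exact h
      · exfalso
        have := hcov 0 (by omega)
        rw [h0, h] at this
        exact hnotcov this
    have hc2 : c 2 = ⊤ := by
      rcases hcl (c 2) (chain_mono ⟨h0, hr, hcov⟩ 2 (by omega)) with h | h | h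
      · exfalso
        have hlt := (hcov 1 (by omega)).lt
        rw [hc1, h] at hlt
        exact absurd (h1.trans hlt) (lt_irrefl _)
      · exfalso
        have hlt := (hcov 1 (by omega)).lt
        rw [hc1, h] at hlt
        exact lt_irrefl _ hlt
      · exact h
    match n with
    | 0 => rfl
    | (m+1) =>
      exfalso
      have := (hcov 2 (by omega)).lt
      rw [hc2] at this
      exact not_top_lt this

lemma zpowers_normal_eq_one (g : A4) (hg : (Subgroup.zpowers g).Normal) : g = 1 := by
  apply (by decide : ∀ g : A4, (∀ h : A4, ∃ k ∈ Finset.range 12, h * g * h⁻¹ = g ^ k) → g = 1)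
  intro h
  have hm : h * g * h⁻¹ ∈ Subgroup.zpowers g := hg.conj_mem g (Subgroup.mem_zpowers g) h
  rw [← mem_powers_iff_mem_zpowers] at hm
  obtain ⟨m, hmk⟩ := hm
  refine ⟨m % 12, Finset.mem_range.mpr (Nat.mod_lt _ (by norm_num)), ?_⟩
  rw [← hmk]
  have : g ^ (m % Fintype.card A4) = g ^ m := pow_mod_card g m
  rw [A4_fintype_card] at this
  exact this.symm

theorem stmt_14 :
    (∀ H : Subgroup (alternatingGroup (Fin 4)),
      (Nat.card H).Prime → AllMaxChainsSameLength H) ∧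
    ¬ IsSupersolvable (alternatingGroup (Fin 4)) := by
  constructor
  · intro H hp
    have hdvd : Nat.card H ∣ 12 := A4_card ▸ Subgroup.card_subgroup_dvd_card H
    have hcase : Nat.card H = 2 ∨ Nat.card H = 3 := by
      have hmem : Nat.card H ∈ Nat.divisors 12 := Nat.mem_divisors.mpr ⟨hdvd, by norm_num⟩
      have := (by decide : ∀ m ∈ Nat.divisors 12, m.Prime → m = 2 ∨ m = 3) _ hmem hp
      exact this
    rcases hcase with h | h
    · -- order 2 : chain length 2 through V4
      have hHV : H < V4 := by
        refine lt_of_le_of_ne (le_V4_of_card_two H h) ?_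
        intro he
        rw [he] at h
        rw [V4_card] at h
        omega
      have hVt : V4 < ⊤ := by
        refine lt_of_le_of_ne le_top ?_
        intro he
        have := V4_card
        rw [he, Subgroup.card_top, A4_card] at this
        omega
      intro r s c d hc hd
      rw [length_two H V4 hHV hVt (over_two H h) r c hc,
        length_two H V4 hHV hVt (over_two H h) s d hd]
    · -- order 3 : chain length 1
      have hne : H ≠ ⊤ := by
        intro he
        rw [he, Subgroup.card_top, A4_card] at h
        omega
      intro r s c d hc hd
      rw [length_one H hne (over_three H h) r c hc,
        length_one H hne (over_three H h) s d hd]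
  · rintro ⟨n, s, h0, hn, hnorm, hstep⟩
    have hbot : ∀ i ≤ n, s i = ⊥ := by
      intro i
      induction i with
      | zero => intro _; exact h0
      | succ m ih =>
        intro hm
        obtain ⟨g, hg⟩ := hstep m (by omega)
        rw [ih (by omega), bot_sup_eq] at hg
        have hgn : (Subgroup.zpowers g).Normal := hg ▸ hnorm (m + 1)
        have := zpowers_normal_eq_one g hgn
        rw [← hg, this, Subgroup.zpowers_one_eq_bot]
    have hbt : (⊤ : Subgroup A4) = ⊥ := by
      have := hbot n le_rfl
      rw [hn] at this
      exact this
    have h1 : Nat.card (⊥ : Subgroup A4) = 1 := Subgroup.card_bot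
    have h12 : Nat.card (⊤ : Subgroup A4) = 12 := by rw [Subgroup.card_top, A4_card]
    rw [hbt, h1] at h12
    omega
end

section
/- δ(S₅) > 16, where S₅ is the symmetric group on 5 letters. -/
/-- `delta G` is the number of subgroups of `G` not all of whose maximal chains
in `G` have the same length. -/
noncomputable def delta (G : Type*) [Group G] : ℕ :=
  Nat.card {H : Subgroup G // ¬ AllMaxChainsSameLength H}


/-! The trivial subgroup, `⟨(1 4)(2 3)⟩` and the fifteen cyclic subgroups of order `4` of `S₅`
each have maximal chains of two different lengths. For `C₄ = ⟨(1 2 4 3)⟩` these are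
`C₄ < F₂₀ < S₅` and `C₄ < D₈ < S₄ < S₅`. Here `F₂₀` is the normalizer of a Sylow `5`-subgroup;
it is maximal because an intermediate subgroup `K` would have `[K : F₂₀] ≡ 1 [MOD 5]` Sylow
`5`-subgroups, and no proper divisor of `[S₅ : F₂₀] = 6` other than `1` is `≡ 1 [MOD 5]`.
`D₈` is any Sylow `2`-subgroup containing `C₄`: a `2`-group acting on five points has a fixed
point, which must be the unique fixed point `0` of `(1 2 4 3)`, so `D₈ ≤ S₄ = Stab(0)`.
Prepending `1 ⋖ C₂ ⋖ C₄` to both chains handles `C₂ = ⟨(1 4)(2 3)⟩` and `1`, and conjugation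
transports the property to the conjugates of `C₄`. -/

namespace Subgroup

variable {G : Type*} [Group G] {H K : Subgroup G}

theorem relIndex_mul_card (hHK : H ≤ K) : H.relIndex K * Nat.card H = Nat.card K := by
  rw [mul_comm, ← card_mul_index (H.subgroupOf K),
    Nat.card_congr (subgroupOfEquivOfLe hHK).toEquiv, relIndex]

theorem covBy_of_relIndex_prime (hHK : H ≤ K) (hp : (H.relIndex K).Prime) : H ⋖ K := by
  refine ⟨hHK.lt_of_ne ?_, fun M hHM hMK => ?_⟩
  · rintro rfl
    exact Nat.not_prime_one (relIndex_self H ▸ hp)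
  have hmul := relIndex_mul_relIndex _ _ _ hHM.le hMK.le
  rcases Nat.prime_mul_iff.mp (hmul ▸ hp) with ⟨-, h⟩ | ⟨-, h⟩
  · exact hMK.not_ge (relIndex_eq_one.mp h)
  · exact hHM.not_ge (relIndex_eq_one.mp h)

theorem covBy_of_card_eq_prime_mul [Finite H] (hHK : H ≤ K) {p : ℕ} (hp : p.Prime)
    (hcard : Nat.card K = p * Nat.card H) : H ⋖ K := by
  refine covBy_of_relIndex_prime hHK ?_
  rwa [Nat.eq_of_mul_eq_mul_right Nat.card_pos ((relIndex_mul_card hHK).trans hcard)]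

theorem mem_normalizer_zpowers_of_conj_mem [Finite G] {g x : G} (h : g * x * g⁻¹ ∈ zpowers x) :
    g ∈ normalizer (zpowers x : Set G) := by
  refine mem_normalizer_fintype fun n hn => ?_
  obtain ⟨k, rfl⟩ := mem_zpowers_iff.mp hn
  rw [← MulAut.conj_apply, map_zpow, MulAut.conj_apply]
  exact zpow_mem h k

end Subgroup

namespace Sylow

open Subgroup

variable {G : Type*} [Group G] [Finite G] {p : ℕ} [Fact p.Prime]

theorem relIndex_normalizer_modEq_one (P : Sylow p G) {K : Subgroup G}
    (hK : normalizer (P : Set G) ≤ K) : (normalizer (P : Set G)).relIndex K ≡ 1 [MOD p] := by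
  have hPK : (P : Subgroup G) ≤ K := le_normalizer.trans hK
  have := card_sylow_modEq_one p K
  rw [card_eq_index_normalizer (P.subtype hPK)] at this
  have hN : (normalizer (P : Set G)).subgroupOf K =
      normalizer ((P.subtype hPK : Subgroup K) : Set K) := by
    rw [coe_subtype]
    exact subgroupOf_normalizer_eq hPK
  rwa [relIndex, hN]

theorem normalizer_covBy_top (P : Sylow p G) (hne : normalizer (P : Set G) ≠ ⊤)
    (hdiv : ∀ d, d ∣ (normalizer (P : Set G)).index → d ≡ 1 [MOD p] →
      d = 1 ∨ d = (normalizer (P : Set G)).index) :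
    normalizer (P : Set G) ⋖ ⊤ := by
  refine ⟨hne.lt_top, fun K hNK hK => ?_⟩
  have hmul := relIndex_mul_index hNK.le
  rcases hdiv _ (Dvd.intro _ hmul) (P.relIndex_normalizer_modEq_one hNK.le) with h | h
  · exact hNK.not_ge (relIndex_eq_one.mp h)
  · have hidx : K.index = 1 := by
      rw [h] at hmul
      exact (Nat.mul_eq_left index_ne_zero_of_finite).mp hmul
    exact hK.ne (index_eq_one.mp hidx)

end Sylow

theorem IsPGroup.le_stabilizer_of_fixedBy_subset {p : ℕ} [Fact p.Prime] {G α : Type*} [Group G]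
    [MulAction G α] {Q : Subgroup G} (hQ : IsPGroup p Q) (hα : ¬ p ∣ Nat.card α) {g : G}
    (hg : g ∈ Q) {a : α} (hfix : MulAction.fixedBy α g ⊆ {a}) :
    Q ≤ MulAction.stabilizer G a := by
  obtain ⟨b, hb⟩ := hQ.nonempty_fixed_point_of_prime_not_dvd_card α hα
  obtain rfl : b = a := hfix (hb ⟨g, hg⟩)
  exact fun q hq => hb ⟨q, hq⟩

section MaxChains

variable {G G' : Type*} [Group G] [Group G'] {H K : Subgroup G} {r : ℕ} {c : ℕ → Subgroup G}

theorem isMaxChainOf_top : IsMaxChainOf (⊤ : Subgroup G) 0 fun _ => ⊤ :=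
  ⟨rfl, rfl, fun _ h => absurd h (Nat.not_lt_zero _)⟩

theorem IsMaxChainOf.cons (hHK : H ⋖ K) (hc : IsMaxChainOf K r c) :
    IsMaxChainOf H (r + 1) (Stream'.cons H c) := by
  obtain ⟨h0, hr, hcov⟩ := hc
  refine ⟨rfl, hr, ?_⟩
  rintro (_ | i) hi
  · show H ⋖ c 0
    rwa [h0]
  · exact hcov i (Nat.lt_of_succ_lt_succ hi)

theorem AllMaxChainsSameLength.of_covBy_s17 (hHK : H ⋖ K) (hH : AllMaxChainsSameLength H) :
    AllMaxChainsSameLength K :=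
  fun _ _ _ _ hc hd => Nat.succ_injective (hH _ _ _ _ (hc.cons hHK) (hd.cons hHK))

theorem IsMaxChainOf.mapSubgroup (e : G ≃* G') (hc : IsMaxChainOf H r c) :
    IsMaxChainOf (e.mapSubgroup H) r (e.mapSubgroup ∘ c) := by
  obtain ⟨h0, hr, hcov⟩ := hc
  refine ⟨congrArg _ h0, ?_, fun i hi => (apply_covBy_apply_iff e.mapSubgroup).mpr (hcov i hi)⟩
  simp only [Function.comp_apply, hr, map_top]

theorem AllMaxChainsSameLength.of_mapSubgroup (e : G ≃* G')
    (h : AllMaxChainsSameLength (e.mapSubgroup H)) : AllMaxChainsSameLength H :=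
  fun r s _ _ hc hd => h r s _ _ (hc.mapSubgroup e) (hd.mapSubgroup e)

end MaxChains

section SymmetricGroupFive

open Equiv Subgroup

local notation "S₅" => Perm (Fin 5)

instance : Fact (Nat.Prime 5) := ⟨by norm_num⟩

theorem card_perm_fin_five : Nat.card S₅ = 120 := by
  rw [Nat.card_perm, Nat.card_fin]
  rfl

def fiveCycle : S₅ := c[0, 1, 2, 3, 4]

/-- The permutation `x ↦ 2x` of `ZMod 5`; it normalizes `⟨fiveCycle⟩` since it conjugates
`x ↦ x + 1` to `x ↦ x + 2`. -/
def fourCycle : S₅ := c[1, 2, 4, 3]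

theorem orderOf_fiveCycle : orderOf fiveCycle = 5 :=
  orderOf_eq_prime (by decide) (by decide)

theorem orderOf_fourCycle : orderOf fourCycle = 4 :=
  orderOf_eq_prime_pow (p := 2) (n := 1) (by decide) (by decide)

theorem index_zpowers_fiveCycle : (zpowers fiveCycle).index = 24 := by
  have := card_mul_index (zpowers fiveCycle)
  rw [Nat.card_zpowers, orderOf_fiveCycle, card_perm_fin_five] at this
  omega

def fiveSylow : Sylow 5 S₅ :=
  (IsPGroup.of_card (n := 1) (by rw [Nat.card_zpowers, orderOf_fiveCycle, pow_one])).toSylow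
    (by rw [index_zpowers_fiveCycle]; decide)

theorem fourCycle_mem_normalizer_fiveSylow : fourCycle ∈ normalizer (fiveSylow : Set S₅) := by
  refine mem_normalizer_zpowers_of_conj_mem ?_
  rw [show fourCycle * fiveCycle * fourCycle⁻¹ = fiveCycle ^ 2 by decide]
  exact pow_mem (mem_zpowers _) 2

theorem swap_notMem_normalizer_fiveSylow : swap 0 1 ∉ normalizer (fiveSylow : Set S₅) := by
  intro h
  have : swap 0 1 * fiveCycle * (swap 0 1)⁻¹ ∈ zpowers fiveCycle :=
    (mem_normalizer_iff.mp h fiveCycle).mp (mem_zpowers _)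
  rw [mem_zpowers_iff_mem_range_orderOf, orderOf_fiveCycle] at this
  revert this
  decide

theorem index_normalizer_fiveSylow : (normalizer (fiveSylow : Set S₅)).index = 6 := by
  have hdvd : (normalizer (fiveSylow : Set S₅)).index ∣ 24 := by
    rw [← Sylow.card_eq_index_normalizer, ← index_zpowers_fiveCycle]
    exact fiveSylow.card_dvd_index
  have hmod : (normalizer (fiveSylow : Set S₅)).index ≡ 1 [MOD 5] :=
    fiveSylow.card_eq_index_normalizer ▸ card_sylow_modEq_one 5 S₅
  have hne : (normalizer (fiveSylow : Set S₅)).index ≠ 1 := fun h =>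
    swap_notMem_normalizer_fiveSylow (index_eq_one.mp h ▸ mem_top _)
  generalize (normalizer (fiveSylow : Set S₅)).index = n at *
  have := Nat.le_of_dvd (by norm_num) hdvd
  unfold Nat.ModEq at hmod
  interval_cases n <;> omega

theorem card_normalizer_fiveSylow : Nat.card (normalizer (fiveSylow : Set S₅)) = 20 := by
  have := card_mul_index (normalizer (fiveSylow : Set S₅))
  rw [index_normalizer_fiveSylow, card_perm_fin_five] at this
  omega

theorem normalizer_fiveSylow_covBy_top : normalizer (fiveSylow : Set S₅) ⋖ ⊤ := by
  refine fiveSylow.normalizer_covBy_top (fun h => ?_) fun d hd hmod => ?_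
  · exact swap_notMem_normalizer_fiveSylow (h ▸ mem_top _)
  · rw [index_normalizer_fiveSylow] at hd ⊢
    have := Nat.le_of_dvd (by norm_num) hd
    unfold Nat.ModEq at hmod
    interval_cases d <;> omega

theorem card_stabilizer_zero : Nat.card (MulAction.stabilizer S₅ (0 : Fin 5)) = 24 := by
  have := card_mul_index (MulAction.stabilizer S₅ (0 : Fin 5))
  rw [MulAction.index_stabilizer_of_transitive, Nat.card_fin, card_perm_fin_five] at this
  omega

theorem stabilizer_zero_covBy_top : MulAction.stabilizer S₅ (0 : Fin 5) ⋖ ⊤ :=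
  covBy_of_relIndex_prime le_top <| by
    rw [relIndex_top_right, MulAction.index_stabilizer_of_transitive, Nat.card_fin]
    norm_num

theorem card_sylow_two (Q : Sylow 2 S₅) : Nat.card Q = 8 := by
  rw [Q.card_eq_multiplicity, card_perm_fin_five, show 120 = 2 ^ 3 * 15 by rfl,
    Nat.factorization_mul_apply_of_coprime (by norm_num), Nat.prime_two.factorization_pow,
    Nat.factorization_eq_zero_of_not_dvd (by norm_num)]
  simp

theorem exists_sylow_two_zpowers_fourCycle_le_le_stabilizer : ∃ Q : Sylow 2 S₅,
    zpowers fourCycle ≤ Q ∧ (Q : Subgroup S₅) ≤ MulAction.stabilizer S₅ (0 : Fin 5) := by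
  have hC4 : IsPGroup 2 (zpowers fourCycle) :=
    IsPGroup.of_card (n := 2) (by rw [Nat.card_zpowers, orderOf_fourCycle]; rfl)
  obtain ⟨Q, hQ⟩ := hC4.exists_le_sylow
  refine ⟨Q, hQ, Q.isPGroup'.le_stabilizer_of_fixedBy_subset (by simp) (hQ (mem_zpowers _)) ?_⟩
  intro x hx
  revert x
  decide

theorem card_zpowers_fourCycle : Nat.card (zpowers fourCycle) = 4 := by
  rw [Nat.card_zpowers, orderOf_fourCycle]

theorem not_allMaxChainsSameLength_zpowers_fourCycle :
    ¬ AllMaxChainsSameLength (zpowers fourCycle) := by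
  obtain ⟨Q, hC4Q, hQS4⟩ := exists_sylow_two_zpowers_fourCycle_le_le_stabilizer
  have hshort := (isMaxChainOf_top.cons normalizer_fiveSylow_covBy_top).cons
    (covBy_of_card_eq_prime_mul (zpowers_le.mpr fourCycle_mem_normalizer_fiveSylow)
      (p := 5) (by norm_num) (by rw [card_normalizer_fiveSylow, card_zpowers_fourCycle]))
  have hlong := ((isMaxChainOf_top.cons stabilizer_zero_covBy_top).cons
    (covBy_of_card_eq_prime_mul hQS4 (p := 3) (by norm_num)
      (by rw [card_stabilizer_zero, card_sylow_two]))).cons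
    (covBy_of_card_eq_prime_mul hC4Q (p := 2) (by norm_num)
      (by rw [card_sylow_two, card_zpowers_fourCycle]))
  exact fun h => absurd (h _ _ _ _ hshort hlong) (by norm_num)

theorem card_zpowers_fourCycle_sq : Nat.card (zpowers (fourCycle ^ 2)) = 2 := by
  rw [Nat.card_zpowers]
  exact orderOf_eq_prime (by decide) (by decide)

theorem not_allMaxChainsSameLength_zpowers_fourCycle_sq :
    ¬ AllMaxChainsSameLength (zpowers (fourCycle ^ 2)) := fun h =>
  not_allMaxChainsSameLength_zpowers_fourCycle <| h.of_covBy_s17 <|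
    covBy_of_card_eq_prime_mul (zpowers_le.mpr (pow_mem (mem_zpowers _) 2)) Nat.prime_two
      (by rw [card_zpowers_fourCycle, card_zpowers_fourCycle_sq])

theorem not_allMaxChainsSameLength_bot : ¬ AllMaxChainsSameLength (⊥ : Subgroup S₅) := fun h =>
  not_allMaxChainsSameLength_zpowers_fourCycle_sq <| h.of_covBy_s17 <|
    covBy_of_card_eq_prime_mul bot_le Nat.prime_two (by rw [card_zpowers_fourCycle_sq, card_bot])

/-- `fourCycle` fixes `0` and squares to `(1 4)(2 3)`. Conjugating by `1`, `(1 2)`, `(1 3)`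
realises the three pairings of `{1, 2, 3, 4}`, and `swap 0 a` then moves the fixed point to `a`:
this gives all fifteen cyclic subgroups of order `4`. -/
def conjugator (x : Fin 5 × Fin 3) : S₅ := swap 0 x.1 * ![1, swap 1 2, swap 1 3] x.2

def cyclicFourSubgroup (x : Fin 5 × Fin 3) : Subgroup S₅ :=
  (MulAut.conj (conjugator x)).mapSubgroup (zpowers fourCycle)

theorem eq_of_conj_fourCycle_mem (x y : Fin 5 × Fin 3)
    (h : (conjugator y)⁻¹ * (conjugator x * fourCycle * (conjugator x)⁻¹) * conjugator y ∈
      zpowers fourCycle) : x = y := by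
  rw [mem_zpowers_iff_mem_range_orderOf, orderOf_fourCycle] at h
  revert x y
  decide

theorem injective_cyclicFourSubgroup : Function.Injective cyclicFourSubgroup := by
  intro x y h
  have hx : conjugator x * fourCycle * (conjugator x)⁻¹ ∈ cyclicFourSubgroup x :=
    mem_map_of_mem _ (mem_zpowers _)
  rw [h, cyclicFourSubgroup, MulEquiv.coe_mapSubgroup, mem_map_equiv,
    MulAut.conj_symm_apply] at hx
  exact eq_of_conj_fourCycle_mem x y hx

theorem card_cyclicFourSubgroup (x : Fin 5 × Fin 3) : Nat.card (cyclicFourSubgroup x) = 4 := by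
  rw [cyclicFourSubgroup, card_mapSubgroup, card_zpowers_fourCycle]

theorem not_allMaxChainsSameLength_cyclicFourSubgroup (x : Fin 5 × Fin 3) :
    ¬ AllMaxChainsSameLength (cyclicFourSubgroup x) :=
  mt (AllMaxChainsSameLength.of_mapSubgroup _) not_allMaxChainsSameLength_zpowers_fourCycle

end SymmetricGroupFive

open Equiv Subgroup in
theorem stmt_17 : delta (Equiv.Perm (Fin 5)) > 16 := by
  have hsub : insert ⊥ (insert (zpowers (fourCycle ^ 2)) (Set.range cyclicFourSubgroup)) ⊆
      {H : Subgroup (Perm (Fin 5)) | ¬ AllMaxChainsSameLength H} := by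
    rintro _ (rfl | rfl | ⟨x, rfl⟩)
    · exact not_allMaxChainsSameLength_bot
    · exact not_allMaxChainsSameLength_zpowers_fourCycle_sq
    · exact not_allMaxChainsSameLength_cyclicFourSubgroup x
  have hC2 : zpowers (fourCycle ^ 2) ∉ Set.range cyclicFourSubgroup := by
    rintro ⟨x, hx⟩
    have := card_cyclicFourSubgroup x
    rw [hx, card_zpowers_fourCycle_sq] at this
    omega
  have hbot : ⊥ ∉ insert (zpowers (fourCycle ^ 2)) (Set.range cyclicFourSubgroup) := by
    rintro (h | ⟨x, hx⟩)
    · simpa [← h] using card_zpowers_fourCycle_sq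
    · simpa [hx] using card_cyclicFourSubgroup x
  have := Set.ncard_le_ncard hsub
  rw [Set.ncard_insert_of_notMem hbot, Set.ncard_insert_of_notMem hC2,
    Set.ncard_range_of_injective injective_cyclicFourSubgroup, Nat.card_prod, Nat.card_fin,
    Nat.card_fin] at this
  rw [delta, ← Set.coe_ofPred, Nat.card_coe_set_eq]
  omega
end
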